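/- arXiv:1803.09908 — 4 statements merged into one kernel-verified Lean document; each statement's English description precedes it below -/
import Mathlib

section
/- (Saito's criterion, valid over a field of arbitrary characteristic.) Let A be a central hyperplane arrangement of n hyperplanes in K^l over a field K, and let δ_1, …, δ_l ∈ D(A) be homogeneous vector fields, with δ_i = Σ_{j=1}^l f_{ij} ∂/∂x_j. Then the following are equivalent: (1) D(A) is a free S-module with basis δ_1, …, δ_l, i.e. D(A) = S·δ_1 ⊕ ⋯ ⊕ S·δ_l; (2) det(f_{ij})_{i,j} = c·Q(A) for some nonzero scalar c ∈ K; (3) δ_1, …, δ_l are linearly independent over S and Σ_{i=1}^l pdeg(δ_i) = n. -/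
/-! Every matrix with rows in `D(A)` has determinant divisible by each `α_k`: it maps the constant
gradient of `α_k`, which has a unit coordinate, into `α_k S^l`, and the adjugate then gives
`α_k ∣ det`. Distinct hyperplanes give pairwise coprime irreducible linear forms, so
`Q(A) ∣ det`. Hence (2) ⇔ (3) is a degree count, and (2) ⇒ (1) is Cramer's rule: replacing a row
of `(f_{ij})` by any `θ ∈ D(A)` gives a determinant divisible by `Q(A)`, i.e. by `det (f_{ij})`.
For (1) ⇒ (2) write `det (f_{ij}) = Q(A) g`; a basis of `D(A)` divides the determinant of every
matrix with rows in `D(A)`. The matrix `Q(A) I` gives `g ∣ Q(A)^l`. For each `k`, with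
`∂_{j₀} α_k ≠ 0` and `Q_k = Q(A) / α_k`, the fields `Q(A) ∂_{j₀}` and
`Q_k (∂_{j₀}α_k ∂_m - ∂_mα_k ∂_{j₀})` have determinant `Q(A) (Q_k ∂_{j₀}α_k)^(l-1)`,
so `α_k ∤ g`. Thus `g` is a unit. -/

open MvPolynomial

namespace HApaper

variable {K : Type*} [CommRing K] {l n : ℕ}

/-- The data of a central arrangement of `n` hyperplanes in `K^l`: `n` nonzero
homogeneous linear forms defining pairwise distinct hyperplanes. -/
structure IsCentralArrangement (α : Fin n → MvPolynomial (Fin l) K) : Prop where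
  homog : ∀ i, (α i).IsHomogeneous 1
  nonzero : ∀ i, α i ≠ 0
  distinct : ∀ i j, i ≠ j → ∀ c : K, α i ≠ c • α j

/-- The defining polynomial `Q(A) = α_1 ⋯ α_n`. -/
noncomputable def defPoly (α : Fin n → MvPolynomial (Fin l) K) : MvPolynomial (Fin l) K :=
  ∏ i, α i

/-- A polynomial vector field `δ = Σ_j f_j ∂/∂x_j` (encoded by its coefficient tuple
`(f_1, …, f_l)`) applied to a polynomial `g`, giving `Σ_j f_j ∂g/∂x_j`. -/
noncomputable def derApply (δ : Fin l → MvPolynomial (Fin l) K) (g : MvPolynomial (Fin l) K) :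
    MvPolynomial (Fin l) K :=
  ∑ j, δ j * MvPolynomial.pderiv j g

lemma derApply_add (δ₁ δ₂ : Fin l → MvPolynomial (Fin l) K) (g : MvPolynomial (Fin l) K) :
    derApply (δ₁ + δ₂) g = derApply δ₁ g + derApply δ₂ g := by
  simp [derApply, add_mul, Finset.sum_add_distrib]

lemma derApply_smul (c : MvPolynomial (Fin l) K) (δ : Fin l → MvPolynomial (Fin l) K)
    (g : MvPolynomial (Fin l) K) : derApply (c • δ) g = c * derApply δ g := by
  simp [derApply, Finset.mul_sum, mul_assoc]

/-- The module `D(A) = {δ ∈ Der | δ(α_i) ∈ (α_i)S for all i}` of logarithmic vector fields. -/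
noncomputable def logDer (α : Fin n → MvPolynomial (Fin l) K) :
    Submodule (MvPolynomial (Fin l) K) (Fin l → MvPolynomial (Fin l) K) where
  carrier := {δ | ∀ i, α i ∣ derApply δ (α i)}
  add_mem' := by
    intro a b ha hb i
    rw [derApply_add]
    exact dvd_add (ha i) (hb i)
  zero_mem' := by
    intro i
    simp [derApply]
  smul_mem' := by
    intro c δ hδ i
    rw [derApply_smul]
    exact Dvd.dvd.mul_left (hδ i) c

/-- A vector field is homogeneous of polynomial degree `d` if all its coefficients are
homogeneous polynomials of degree `d`. -/
def IsHomogVF (δ : Fin l → MvPolynomial (Fin l) K) (d : ℕ) : Prop :=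
  ∀ j, (δ j).IsHomogeneous d

/-- `A` is free with exponents `(e_1, …, e_l)` if `D(A)` has a basis of homogeneous
vector fields of polynomial degrees `e_1, …, e_l`. -/
def IsFreeWithExponents (α : Fin n → MvPolynomial (Fin l) K) (e : Fin l → ℕ) : Prop :=
  ∃ b : Module.Basis (Fin l) (MvPolynomial (Fin l) K) (logDer α),
    ∀ i, IsHomogVF ((b i : Fin l → MvPolynomial (Fin l) K)) (e i)

/-- `A` is free if `D(A)` is a free module over the polynomial ring. -/
def IsFree (α : Fin n → MvPolynomial (Fin l) K) : Prop :=
  Module.Free (MvPolynomial (Fin l) K) (logDer α)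

section Matrix

open Matrix

variable {ι R : Type*} [Fintype ι] [DecidableEq ι] [CommRing R]

theorem linearIndependent_rows_iff_det_ne_zero [IsDomain R] {M : Matrix ι ι R} :
    LinearIndependent R M.row ↔ M.det ≠ 0 := by
  refine ⟨fun h hdet ↦ ?_, linearIndependent_rows_of_det_ne_zero⟩
  obtain ⟨v, hv0, hv⟩ := exists_vecMul_eq_zero_iff.2 hdet
  rw [vecMul_eq_sum] at hv
  exact hv0 (funext (Fintype.linearIndependent_iff.1 h v hv))

theorem dvd_det_of_dvd_mulVec {W : Matrix ι ι R} {v : ι → R} {p : R} {j : ι}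
    (hj : IsUnit (v j)) (h : ∀ m, p ∣ (W *ᵥ v) m) : p ∣ W.det := by
  choose u hu using h
  have hWv : W *ᵥ v = p • u := funext hu
  have key : W.det • v = p • (W.adjugate *ᵥ u) := by
    rw [← mulVec_smul, ← hWv, mulVec_mulVec, adjugate_mul, smul_mulVec, one_mulVec]
  exact hj.dvd_mul_right.1 ⟨_, congrFun key j⟩

theorem det_dvd_det_of_forall_mem_span {M W : Matrix ι ι R}
    (h : ∀ m, W m ∈ Submodule.span R (Set.range M.row)) : M.det ∣ W.det := by
  choose c hc using fun m ↦ (Submodule.mem_span_range_iff_exists_fun R).1 (h m)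
  have hW : W = Matrix.of c * M := by
    ext m j
    simp [mul_apply, ← hc m, Finset.sum_apply]
  rw [hW, det_mul]
  exact dvd_mul_left _ _

theorem mem_span_rows_of_det_dvd [IsDomain R] {M : Matrix ι ι R} (hM : M.det ≠ 0)
    {w : ι → R} (h : ∀ i, M.det ∣ (M.updateRow i w).det) :
    w ∈ Submodule.span R (Set.range M.row) := by
  choose g hg using h
  have hcramer : Mᵀ.cramer w = M.det • g := funext fun i ↦ by
    rw [cramer_transpose_apply, hg, Pi.smul_apply, smul_eq_mul]
  have key : M.det • (g ᵥ* M) = M.det • w := by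
    rw [← mulVec_transpose, ← mulVec_smul, ← hcramer, mulVec_cramer, det_transpose]
  rw [Submodule.mem_span_range_iff_exists_fun]
  exact ⟨g, (vecMul_eq_sum g M).symm.trans (smul_right_injective _ hM key)⟩

/-- For `v = ∇α` of a linear form `α`, the rows `m ≠ j₀` are the constant vector fields
`v j₀ ∂_m - v m ∂_{j₀}`, which annihilate `α`. -/
def linearFormFrame (v : ι → R) (j₀ : ι) (a : R) : Matrix ι ι R :=
  Matrix.of fun m ↦
    if m = j₀ then Pi.single j₀ a else Pi.single m (v j₀) - Pi.single j₀ (v m)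

theorem linearFormFrame_mulVec (v : ι → R) (j₀ : ι) (a : R) (m : ι) :
    (linearFormFrame v j₀ a *ᵥ v) m = if m = j₀ then a * v j₀ else 0 := by
  by_cases hm : m = j₀
  · simp [linearFormFrame, mulVec, hm, single_dotProduct]
  · simp only [mulVec, linearFormFrame, of_apply, if_neg hm, sub_dotProduct, single_dotProduct]
    ring

theorem det_linearFormFrame [LinearOrder ι] {v : ι → R} {j₀ : ι} (a : R)
    (hv : ∀ m, j₀ < m → v m = 0) :
    (linearFormFrame v j₀ a).det = a * v j₀ ^ (Fintype.card ι - 1) := by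
  have hupper : (linearFormFrame v j₀ a).IsUpperTriangular := by
    intro i j (hji : j < i)
    by_cases hi : i = j₀
    · simp [linearFormFrame, hi, Pi.single_eq_of_ne (hi ▸ hji.ne : j ≠ j₀)]
    · by_cases hj : j = j₀
      · simp [linearFormFrame, hi, hj, hv i (hj ▸ hji)]
      · simp [linearFormFrame, hi, hj, Pi.single_eq_of_ne hji.ne]
  have hdiag : ∀ m ∈ ({j₀}ᶜ : Finset ι), linearFormFrame v j₀ a m m = v j₀ := by
    intro m hm
    simp [linearFormFrame, (by simpa using hm : m ≠ j₀)]
  rw [det_of_isUpperTriangular hupper, Fintype.prod_eq_mul_prod_compl j₀,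
    Finset.prod_congr rfl hdiag, Finset.prod_const, Finset.card_compl, Finset.card_singleton]
  simp [linearFormFrame]

end Matrix

theorem exists_basis_coe_eq_iff {ι R M : Type*} [Ring R] [AddCommGroup M] [Module R M]
    {D : Submodule R M} {v : ι → M} :
    (∃ b : Module.Basis ι R D, ∀ i, (b i : M) = v i) ↔
      LinearIndependent R v ∧ Submodule.span R (Set.range v) = D := by
  constructor
  · rintro ⟨b, hb⟩
    obtain rfl : v = D.subtype ∘ b := funext fun i ↦ (hb i).symm
    refine ⟨b.linearIndependent.map' _ D.ker_subtype, ?_⟩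
    rw [Set.range_comp, Submodule.span_image, b.span_eq, Submodule.map_subtype_top]
  · rintro ⟨hli, rfl⟩
    exact ⟨Module.Basis.span hli, fun i ↦ by rw [Module.Basis.span_apply]⟩

section Homogeneous

variable {σ R : Type*}

theorem exists_pderiv_ne_zero [CommSemiring R] [Fintype σ] {p : MvPolynomial σ R}
    (hp : p.IsHomogeneous 1) (h0 : p ≠ 0) : ∃ j, pderiv j p ≠ 0 := by
  by_contra! h
  apply h0
  simpa [h] using hp.sum_X_mul_pderiv.symm

theorem det_isHomogeneous [CommRing R] {ι : Type*} [Fintype ι] [DecidableEq ι]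
    (M : Matrix ι ι (MvPolynomial σ R)) (e : ι → ℕ)
    (h : ∀ i j, (M i j).IsHomogeneous (e i)) :
    M.det.IsHomogeneous (∑ i, e i) := by
  rw [Matrix.det_apply]
  refine IsHomogeneous.sum _ _ _ fun τ _ ↦ ?_
  have hprod : (∏ i, M (τ i) i).IsHomogeneous (∑ i, e i) := by
    rw [← Equiv.sum_comp τ e]
    exact IsHomogeneous.prod _ _ _ fun i _ ↦ h (τ i) i
  rcases Int.units_eq_one_or (Equiv.Perm.sign τ) with hs | hs <;>
    simp [hs, Units.smul_def, hprod, hprod.neg]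

variable {K : Type*} [Field K]

theorem isUnit_of_isHomogeneous_zero {p : MvPolynomial σ K} (hp : p.IsHomogeneous 0)
    (h0 : p ≠ 0) : IsUnit p := by
  have hdeg := hp.totalDegree h0
  refine isUnit_iff_totalDegree_of_isReduced.2 ⟨isUnit_iff_ne_zero.2 fun hc ↦ h0 ?_, hdeg⟩
  rw [totalDegree_eq_zero_iff_eq_C.1 hdeg, hc, map_zero]

theorem exists_C_mul_eq_of_dvd_of_isHomogeneous {p q : MvPolynomial σ K} {d : ℕ} (hpq : p ∣ q)
    (hq0 : q ≠ 0) (hp : p.IsHomogeneous d) (hq : q.IsHomogeneous d) :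
    ∃ c : K, c ≠ 0 ∧ q = C c * p := by
  obtain ⟨g, rfl⟩ := hpq
  have hp0 : p ≠ 0 := left_ne_zero_of_mul hq0
  have hg0 : g ≠ 0 := right_ne_zero_of_mul hq0
  have hgC : g = C (g.coeff 0) := by
    have hdeg := hq.totalDegree hq0
    rw [totalDegree_mul_of_isDomain hp0 hg0, hp.totalDegree hp0] at hdeg
    exact totalDegree_eq_zero_iff_eq_C.1 (by omega)
  refine ⟨g.coeff 0, fun hc ↦ hg0 (by rw [hgC, hc, map_zero]), ?_⟩
  rw [mul_comm, ← hgC]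

end Homogeneous

theorem defPoly_smul_mem_logDer (α : Fin n → MvPolynomial (Fin l) K)
    (δ : Fin l → MvPolynomial (Fin l) K) : defPoly α • δ ∈ logDer α := fun i ↦ by
  rw [derApply_smul]
  exact (Finset.dvd_prod_of_mem α (Finset.mem_univ i)).mul_right _

namespace IsCentralArrangement

theorem defPoly_isHomogeneous {α : Fin n → MvPolynomial (Fin l) K}
    (hA : IsCentralArrangement α) : (defPoly α).IsHomogeneous n := by
  simpa [defPoly] using IsHomogeneous.prod Finset.univ α (fun _ ↦ 1) fun i _ ↦ hA.homog i

theorem defPoly_ne_zero [IsDomain K] {α : Fin n → MvPolynomial (Fin l) K}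
    (hA : IsCentralArrangement α) : defPoly α ≠ 0 :=
  Finset.prod_ne_zero_iff.2 fun i _ ↦ hA.nonzero i

section Field

open Matrix

variable {K : Type*} [Field K] {l n : ℕ} {α : Fin n → MvPolynomial (Fin l) K}

theorem irreducible (hA : IsCentralArrangement α) (i : Fin n) : Irreducible (α i) := by
  refine irreducible_of_totalDegree_eq_one ((hA.homog i).totalDegree (hA.nonzero i))
    fun x hx ↦ isUnit_iff_ne_zero.2 ?_
  rintro rfl
  obtain ⟨d, hd⟩ := ne_zero_iff.1 (hA.nonzero i)
  exact hd (zero_dvd_iff.1 (hx d))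

theorem not_dvd (hA : IsCentralArrangement α) {i j : Fin n} (hij : i ≠ j) :
    ¬ α i ∣ α j := fun h ↦ by
  obtain ⟨c, -, hc⟩ :=
    exists_C_mul_eq_of_dvd_of_isHomogeneous h (hA.nonzero j) (hA.homog i) (hA.homog j)
  exact hA.distinct j i hij.symm c (by rw [hc, smul_eq_C_mul])

theorem isRelPrime (hA : IsCentralArrangement α) {i j : Fin n} (hij : i ≠ j) :
    IsRelPrime (α i) (α j) :=
  (hA.irreducible i).isRelPrime_iff_not_dvd.2 (hA.not_dvd hij)

theorem isUnit_pderiv (hA : IsCentralArrangement α) {k : Fin n} {j : Fin l}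
    (h : pderiv j (α k) ≠ 0) : IsUnit (pderiv j (α k)) :=
  isUnit_of_isHomogeneous_zero (hA.homog k).pderiv h

theorem dvd_det (hA : IsCentralArrangement α)
    {W : Matrix (Fin l) (Fin l) (MvPolynomial (Fin l) K)} (hW : ∀ m, W m ∈ logDer α)
    (k : Fin n) : α k ∣ W.det := by
  obtain ⟨j, hj⟩ := exists_pderiv_ne_zero (hA.homog k) (hA.nonzero k)
  -- `(W *ᵥ ∇α_k) m = W m (α_k)`, and the constant vector `∇α_k` has a unit coordinate
  exact dvd_det_of_dvd_mulVec (hA.isUnit_pderiv hj) fun m ↦ hW m k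

theorem defPoly_dvd_det (hA : IsCentralArrangement α)
    {W : Matrix (Fin l) (Fin l) (MvPolynomial (Fin l) K)} (hW : ∀ m, W m ∈ logDer α) :
    defPoly α ∣ W.det :=
  Fintype.prod_dvd_of_isRelPrime (fun _ _ hij ↦ hA.isRelPrime hij) (hA.dvd_det hW)

theorem exists_det_eq_defPoly_mul_not_dvd (hA : IsCentralArrangement α) (k : Fin n) :
    ∃ W : Matrix (Fin l) (Fin l) (MvPolynomial (Fin l) K), (∀ m, W m ∈ logDer α) ∧
      ∃ h, W.det = defPoly α * h ∧ ¬ α k ∣ h := by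
  classical
  set v : Fin l → MvPolynomial (Fin l) K := fun j ↦ pderiv j (α k)
  set Q' := ∏ i ∈ {k}ᶜ, α i
  have hS : (Finset.univ.filter fun j ↦ v j ≠ 0).Nonempty := by
    obtain ⟨j, hj⟩ := exists_pderiv_ne_zero (hA.homog k) (hA.nonzero k)
    exact ⟨j, by simpa using hj⟩
  -- a maximal `j₀` makes the frame upper triangular
  set j₀ := (Finset.univ.filter fun j ↦ v j ≠ 0).max' hS
  have hj₀ : v j₀ ≠ 0 := (Finset.mem_filter.1 (Finset.max'_mem _ hS)).2
  have hv : ∀ m, j₀ < m → v m = 0 := fun m hm ↦ by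
    by_contra h
    exact (Finset.le_max' _ m (by simpa using h)).not_gt hm
  have hQ : defPoly α = α k * Q' := Fintype.prod_eq_mul_prod_compl k α
  refine ⟨Q' • linearFormFrame v j₀ (α k), fun m i ↦ ?_, (Q' * v j₀) ^ (l - 1), ?_, ?_⟩
  · change α i ∣ derApply (Q' • linearFormFrame v j₀ (α k) m) (α i)
    rw [derApply_smul]
    by_cases hik : i = k
    · subst hik
      change α i ∣ Q' * (linearFormFrame v j₀ (α i) *ᵥ v) m
      rw [linearFormFrame_mulVec]
      split_ifs
      · exact dvd_mul_of_dvd_right (dvd_mul_right _ _) _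
      · simp
    · exact (Finset.dvd_prod_of_mem α (by simpa using hik)).mul_right _
  · have hpow : Q' ^ l = Q' * Q' ^ (l - 1) := by rw [← pow_succ', Nat.sub_add_cancel j₀.pos]
    rw [det_smul, det_linearFormFrame _ hv, Fintype.card_fin, hpow, hQ]
    ring
  · have hrel : IsRelPrime (α k) (Q' * v j₀) :=
      (IsRelPrime.prod_right fun i hi ↦ hA.isRelPrime (by simpa [eq_comm] using hi)).mul_right
        (hA.isUnit_pderiv hj₀).isRelPrime_right
    exact fun hdvd ↦ (hA.irreducible k).not_isUnit (hrel.pow_right.isUnit_of_dvd hdvd)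

theorem det_eq_C_mul_defPoly_of_le_span (hA : IsCentralArrangement α)
    {M : Matrix (Fin l) (Fin l) (MvPolynomial (Fin l) K)} (hM : ∀ i, M i ∈ logDer α)
    (hspan : logDer α ≤ Submodule.span _ (Set.range M.row)) :
    ∃ c : K, c ≠ 0 ∧ M.det = C c * defPoly α := by
  have hdvd : ∀ W : Matrix (Fin l) (Fin l) (MvPolynomial (Fin l) K),
      (∀ m, W m ∈ logDer α) → M.det ∣ W.det :=
    fun W hW ↦ det_dvd_det_of_forall_mem_span fun m ↦ hspan (hW m)
  obtain ⟨g, hg⟩ := hA.defPoly_dvd_det hM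
  have hnot_dvd : ∀ k, ¬ α k ∣ g := fun k hk ↦ by
    obtain ⟨W, hW, h, hWdet, hkh⟩ := hA.exists_det_eq_defPoly_mul_not_dvd k
    have := hdvd W hW
    rw [hg, hWdet] at this
    exact hkh (hk.trans ((mul_dvd_mul_iff_left hA.defPoly_ne_zero).1 this))
  have hg_dvd : g ∣ defPoly α ^ l := by
    have := hdvd (defPoly α • 1) fun m ↦ defPoly_smul_mem_logDer α _
    rw [det_smul, det_one, mul_one, Fintype.card_fin, hg] at this
    exact (dvd_mul_left g _).trans this
  have hrel : IsRelPrime g (defPoly α) :=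
    IsRelPrime.prod_right fun k _ ↦
      ((hA.irreducible k).isRelPrime_iff_not_dvd.2 (hnot_dvd k)).symm
  obtain ⟨c, hc, rfl⟩ := isUnit_iff_eq_C_of_isReduced.1 (hrel.pow_right.isUnit_of_dvd hg_dvd)
  exact ⟨c, hc.ne_zero, by rw [hg, mul_comm]⟩

theorem logDer_le_span_of_det_eq (hA : IsCentralArrangement α)
    {M : Matrix (Fin l) (Fin l) (MvPolynomial (Fin l) K)} (hM : ∀ i, M i ∈ logDer α) {c : K}
    (hc : c ≠ 0) (hdet : M.det = C c * defPoly α) :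
    logDer α ≤ Submodule.span _ (Set.range M.row) := by
  intro w hw
  refine mem_span_rows_of_det_dvd (hdet ▸ mul_ne_zero (by simpa) hA.defPoly_ne_zero) fun i ↦ ?_
  rw [hdet, (isUnit_iff_eq_C_of_isReduced.2 ⟨c, hc.isUnit, rfl⟩).mul_left_dvd]
  refine hA.defPoly_dvd_det fun m ↦ ?_
  by_cases hm : m = i
  · rwa [hm, updateRow_self]
  · rw [updateRow_ne hm]
    exact hM m

end Field

end IsCentralArrangement

/-- **Saito's criterion** (valid over a field of arbitrary characteristic).
Given homogeneous `δ_1, …, δ_l ∈ D(A)` with `pdeg δ_i = e_i`, the following are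
equivalent: (1) `D(A)` is free with basis `δ_1, …, δ_l`;
(2) `det (f_{ij}) = c · Q(A)` for some nonzero `c ∈ K`;
(3) `δ_1, …, δ_l` are linearly independent over `S` and `Σ pdeg δ_i = n`. -/
theorem saito_criterion {K : Type*} [Field K] {l n : ℕ}
    (α : Fin n → MvPolynomial (Fin l) K) (hA : IsCentralArrangement α)
    (δ : Fin l → Fin l → MvPolynomial (Fin l) K) (hδ : ∀ i, δ i ∈ logDer α)
    (e : Fin l → ℕ) (hhom : ∀ i, IsHomogVF (δ i) (e i)) :
    ((∃ b : Module.Basis (Fin l) (MvPolynomial (Fin l) K) (logDer α),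
        ∀ i, (b i : Fin l → MvPolynomial (Fin l) K) = δ i) ↔
      (∃ c : K, c ≠ 0 ∧
        (Matrix.of fun i j => δ i j).det = MvPolynomial.C c * defPoly α)) ∧
    ((∃ c : K, c ≠ 0 ∧
        (Matrix.of fun i j => δ i j).det = MvPolynomial.C c * defPoly α) ↔
      (LinearIndependent (MvPolynomial (Fin l) K) δ ∧ ∑ i, e i = n)) := by
  set M : Matrix (Fin l) (Fin l) (MvPolynomial (Fin l) K) := Matrix.of fun i j => δ i j
  have hdeg : M.det.IsHomogeneous (∑ i, e i) := det_isHomogeneous M e hhom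
  have h23 :
      (∃ c : K, c ≠ 0 ∧ M.det = C c * defPoly α) ↔ (M.det ≠ 0 ∧ ∑ i, e i = n) := by
    refine ⟨fun ⟨c, hc, hdet⟩ ↦ ?_, fun h ↦ ?_⟩
    · have h0 : M.det ≠ 0 := hdet ▸ mul_ne_zero (by simpa) hA.defPoly_ne_zero
      exact ⟨h0, hdeg.inj_right (hdet ▸ hA.defPoly_isHomogeneous.C_mul c) h0⟩
    · exact exists_C_mul_eq_of_dvd_of_isHomogeneous (hA.defPoly_dvd_det hδ) h.1
        hA.defPoly_isHomogeneous (h.2 ▸ hdeg)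
  rw [exists_basis_coe_eq_iff, show LinearIndependent _ δ ↔ M.det ≠ 0 from
    linearIndependent_rows_iff_det_ne_zero]
  refine ⟨⟨fun h1 ↦ hA.det_eq_C_mul_defPoly_of_le_span hδ h1.2.ge, fun h2 ↦ ?_⟩, h23⟩
  obtain ⟨c, hc, hdet⟩ := h2
  exact ⟨(h23.1 ⟨c, hc, hdet⟩).1,
    le_antisymm (Submodule.span_le.2 (Set.range_subset_iff.2 hδ))
      (hA.logDer_le_span_of_det_eq hδ hc hdet)⟩

end HApaper
end

section
/- Let I be an ideal of R = Z[x_1,…,x_l]. Then the set of prime numbers p that are zero divisors on R/I (i.e., such that there exists f ∈ R with f ∉ I and pf ∈ I) is finite. -/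
/-!
Every zero divisor on `R/I` lies in one of the finitely many associated primes of `R/I`,
and a proper ideal `P` contains the image of at most one prime number, namely the
characteristic of `R/P`.
-/

namespace HApaper

variable {R : Type*} [CommRing R]

theorem Ideal.ringChar_quotient_eq_of_natCast_mem {P : Ideal R} (hP : P ≠ ⊤) {p : ℕ}
    (hp : p.Prime) (h : (p : R) ∈ P) : ringChar (R ⧸ P) = p :=
  haveI := Ideal.Quotient.nontrivial_iff.mpr hP
  CharP.ringChar_of_prime_eq_zero hp (by rwa [← map_natCast (Ideal.Quotient.mk P),
    Ideal.Quotient.eq_zero_iff_mem])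

theorem setOf_prime_natCast_smul_eq_zero_finite [IsNoetherianRing R] (M : Type*)
    [AddCommGroup M] [Module R M] [Module.Finite R M] :
    {p : ℕ | p.Prime ∧ ∃ x : M, x ≠ 0 ∧ (p : R) • x = 0}.Finite := by
  refine ((associatedPrimes.finite R M).image fun P ↦ ringChar (R ⧸ P)).subset ?_
  rintro p ⟨hp, hzd⟩
  have hmem : (p : R) ∈ ⋃ P ∈ associatedPrimes R M, (P : Set R) := by
    rw [biUnion_associatedPrimes_eq_zero_divisors]
    exact hzd
  obtain ⟨P, hP, hpP⟩ := Set.mem_iUnion₂.mp hmem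
  exact ⟨P, hP, Ideal.ringChar_quotient_eq_of_natCast_mem hP.isPrime.ne_top hp hpP⟩

theorem Ideal.setOf_prime_natCast_isZeroDivisor_quotient_finite [IsNoetherianRing R]
    (I : Ideal R) : {p : ℕ | p.Prime ∧ ∃ f : R, f ∉ I ∧ (p : R) * f ∈ I}.Finite := by
  refine (setOf_prime_natCast_smul_eq_zero_finite (R := R) (R ⧸ I)).subset ?_
  rintro p ⟨hp, f, hf, hpf⟩
  refine ⟨hp, Ideal.Quotient.mk I f, ?_, ?_⟩
  · rwa [Ne, Ideal.Quotient.eq_zero_iff_mem]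
  · rwa [Algebra.smul_def, Ideal.Quotient.algebraMap_eq, ← map_mul,
      Ideal.Quotient.eq_zero_iff_mem]

/-- For any ideal `I` of `ℤ[x_1,…,x_l]`, only finitely many prime numbers are zero
divisors on `R/I`, i.e. admit an `f ∉ I` with `p·f ∈ I`. -/
theorem finitely_many_zero_divisor_primes (l : ℕ) (I : Ideal (MvPolynomial (Fin l) ℤ)) :
    {p : ℕ | p.Prime ∧ ∃ f : MvPolynomial (Fin l) ℤ,
      f ∉ I ∧ (p : MvPolynomial (Fin l) ℤ) * f ∈ I}.Finite :=
  Ideal.setOf_prime_natCast_isZeroDivisor_quotient_finite I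

end HApaper
end

section
/- Let I be a nonzero ideal of R = Z[x_1,…,x_l] and σ a term ordering on R. Then there exists a minimal strong σ-Gröbner basis of I. -/
/-!
For an exponent `d`, the leading coefficients of the elements of `I` with leading monomial `d`,
together with `0`, form an ideal `J_d` of `ℤ`, and `J_d ⊆ J_e` whenever `x^d ∣ x^e`. By Dickson's
lemma and the ascending chain condition in `ℤ`, finitely many exponents `d` suffice: every `e`
with `J_e ≠ 0` lies above one of them with `J_d = J_e`. Elements of `I` whose leading terms are
`x^d` times a generator of `J_d` then form a strong Gröbner basis, which generates `I` by the
division algorithm, and an inclusion-minimal strong Gröbner basis has no leading term dividing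
another.
-/

namespace HApaper

/-- A term ordering on the monomials of `ℤ[x_1,…,x_l]`: a linear order on the
exponent vectors which has `1` as least monomial and is compatible with
multiplication of monomials. -/
structure TermOrder (l : ℕ) where
  lin : LinearOrder (Fin l →₀ ℕ)
  zero_le : ∀ m, lin.le 0 m
  add_le_add_right : ∀ a b c, lin.le a b → lin.le (a + c) (b + c)

/-- The leading monomial `LM_σ(f)` of a polynomial (junk value `0` for `f = 0`). -/
noncomputable def TermOrder.lm {l : ℕ} (σ : TermOrder l) (f : MvPolynomial (Fin l) ℤ) :
    Fin l →₀ ℕ :=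
  letI := σ.lin
  WithBot.unbotD 0 f.support.max

/-- The leading coefficient `LC_σ(f)`. -/
noncomputable def TermOrder.lc {l : ℕ} (σ : TermOrder l) (f : MvPolynomial (Fin l) ℤ) : ℤ :=
  MvPolynomial.coeff (σ.lm f) f

/-- The leading term `LT_σ(f) = LC_σ(f)·x^{LM_σ(f)}`, as an element of `ℤ[x_1,…,x_l]`. -/
noncomputable def TermOrder.lt {l : ℕ} (σ : TermOrder l) (f : MvPolynomial (Fin l) ℤ) :
    MvPolynomial (Fin l) ℤ :=
  MvPolynomial.monomial (σ.lm f) (σ.lc f)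

/-- `G` is a minimal strong `σ`-Gröbner basis of `I` if: its elements are nonzero,
it generates `I`, the leading term of every nonzero element of `I` is divisible by the
leading term of some element of `G`, and no leading term of an element of `G` divides
the leading term of another element of `G`. -/
def IsMinimalStrongGroebnerBasis {l : ℕ} (σ : TermOrder l)
    (I : Ideal (MvPolynomial (Fin l) ℤ)) (G : Finset (MvPolynomial (Fin l) ℤ)) : Prop :=
  (∀ g ∈ G, g ≠ 0) ∧
  Ideal.span (G : Set (MvPolynomial (Fin l) ℤ)) = I ∧
  (∀ f ∈ I, f ≠ 0 → ∃ g ∈ G, σ.lt g ∣ σ.lt f) ∧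
  (∀ g ∈ G, ∀ g' ∈ G, g ≠ g' → ¬ σ.lt g ∣ σ.lt g')

end HApaper

theorem Monotone.exists_finset_le_apply_eq {α β : Type*} [PartialOrder α] [WellQuasiOrderedLE α]
    [PartialOrder β] [WellFoundedGT β] {f : α → β} (hf : Monotone f) (s : Set α) :
    ∃ M : Finset α, ↑M ⊆ s ∧ ∀ a ∈ s, ∃ m ∈ M, m ≤ a ∧ f m = f a := by
  set r : α → α → Prop := fun a b ↦ a ≤ b ∧ f a = f b
  have hr : WellQuasiOrdered r := by
    intro x
    obtain ⟨g, hg⟩ := wellQuasiOrdered_le.exists_monotone_subseq x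
    obtain ⟨n, hn⟩ := WellFoundedGT.monotone_chain_condition
      ⟨fun n ↦ f (x (g n)), fun _ _ h ↦ hf (hg _ _ h)⟩
    exact ⟨g n, g (n + 1), g.strictMono n.lt_succ_self, hg _ _ n.le_succ, hn _ n.le_succ⟩
  set M : Set α := {a ∈ s | ∀ b ∈ s, r b a → b = a}
  have hM : M.Finite := IsAntichain.finite_of_wellQuasiOrdered
    (fun a ha b hb hab h ↦ hab (hb.2 a ha.1 h)) hr
  refine ⟨hM.toFinset, fun a ha ↦ (hM.mem_toFinset.1 ha).1, fun a ha ↦ ?_⟩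
  obtain ⟨m, hma, ⟨hms, hfm⟩, hmin⟩ :=
    exists_minimal_le_of_wellFoundedLT (fun b ↦ b ∈ s ∧ f b = f a) a ⟨ha, rfl⟩
  refine ⟨m, hM.mem_toFinset.2 ⟨hms, fun b hb hbm ↦ ?_⟩, hma, hfm⟩
  exact le_antisymm hbm.1 (hmin ⟨hb, hbm.2.trans hfm⟩ hbm.1)

namespace MonomialOrder

open MvPolynomial

variable {ι R : Type*} [CommRing R] (m : MonomialOrder ι)

theorem degree_monomial_mul_le (k : ι →₀ ℕ) (c : R) (f : MvPolynomial ι R) :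
    m.degree (monomial k c * f) ≼[m] k + m.degree f :=
  calc m.toSyn (m.degree (monomial k c * f))
      ≤ m.toSyn (m.degree (monomial k c) + m.degree f) := degree_mul_le
    _ ≤ m.toSyn (k + m.degree f) := by
      rw [map_add, map_add]
      exact add_le_add (degree_monomial_le c) le_rfl

variable {m} in
theorem exists_support_sub_mul_lt {f g : MvPolynomial ι R} (hf : f ≠ 0)
    (hdvd : m.leadingTerm g ∣ m.leadingTerm f) :
    ∃ q, ∀ e ∈ (f - q * g).support, e ≺[m] m.degree f := by
  obtain ⟨hle | hle, c, hc⟩ := monomial_dvd_monomial.1 hdvd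
  · exact absurd hle (m.leadingCoeff_ne_zero_iff.2 hf)
  obtain ⟨k, hk⟩ := exists_add_of_le hle
  have hdeg : m.degree (monomial k c * g) ≼[m] m.degree f := by
    simpa only [hk, add_comm] using m.degree_monomial_mul_le k c g
  have htop : (monomial k c * g).coeff (m.degree f) = m.leadingCoeff f := by
    rw [hc, hk, add_comm, coeff_monomial_mul, mul_comm]
    rfl
  refine ⟨monomial k c, fun e he ↦ lt_of_not_ge fun hfe ↦ mem_support_iff.1 he ?_⟩
  rcases hfe.lt_or_eq with hlt | heq
  · rw [coeff_sub, coeff_eq_zero_of_lt hlt, coeff_eq_zero_of_lt (hdeg.trans_lt hlt), sub_zero]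
  · rw [← m.toSyn.injective heq, coeff_sub, htop, sub_eq_zero]
    rfl

/-- The leading coefficients of the degree-`d` elements of `I`, together with `0`. -/
def leadingCoeffIdeal (I : Ideal (MvPolynomial ι R)) (d : ι →₀ ℕ) : Ideal R where
  carrier := {c | ∃ f ∈ I, m.degree f ≼[m] d ∧ f.coeff d = c}
  zero_mem' := ⟨0, I.zero_mem, by simp, coeff_zero d⟩
  add_mem' := by
    rintro _ _ ⟨f, hf, hfd, rfl⟩ ⟨g, hg, hgd, rfl⟩
    exact ⟨f + g, I.add_mem hf hg, m.degree_add_le.trans (sup_le hfd hgd), coeff_add d f g⟩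
  smul_mem' := by
    rintro c _ ⟨f, hf, hfd, rfl⟩
    exact ⟨c • f, I.smul_of_tower_mem c hf, m.degree_smul_le.trans hfd, coeff_smul d c f⟩

variable {m} {I : Ideal (MvPolynomial ι R)}

theorem leadingCoeff_mem_leadingCoeffIdeal {f : MvPolynomial ι R} (hf : f ∈ I) :
    m.leadingCoeff f ∈ m.leadingCoeffIdeal I (m.degree f) :=
  ⟨f, hf, le_rfl, rfl⟩

variable (m I) in
theorem leadingCoeffIdeal_mono : Monotone (m.leadingCoeffIdeal I) := by
  intro d e hde
  obtain ⟨k, rfl⟩ := exists_add_of_le hde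
  rintro _ ⟨f, hf, hfd, rfl⟩
  refine ⟨monomial k 1 * f, I.mul_mem_left _ hf, (m.degree_monomial_mul_le k 1 f).trans ?_,
    by rw [add_comm, coeff_monomial_mul, one_mul]⟩
  rw [map_add, map_add, add_comm]
  exact add_le_add hfd le_rfl

theorem exists_leadingTerm_eq_monomial {d : ι →₀ ℕ} {c : R}
    (hc : c ∈ m.leadingCoeffIdeal I d) (hc0 : c ≠ 0) :
    ∃ f ∈ I, m.leadingTerm f = monomial d c := by
  obtain ⟨f, hf, hfd, rfl⟩ := hc
  have hdeg : m.degree f = d :=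
    m.toSyn.injective (le_antisymm hfd (m.le_degree (mem_support_iff.2 hc0)))
  exact ⟨f, hf, by rw [leadingTerm, leadingCoeff, hdeg]⟩

theorem exists_forall_leadingTerm_dvd [IsPrincipalIdealRing R] {d : ι →₀ ℕ}
    (hd : m.leadingCoeffIdeal I d ≠ ⊥) :
    ∃ g ∈ I, g ≠ 0 ∧ ∀ f ∈ I, d ≤ m.degree f →
      m.leadingCoeffIdeal I d = m.leadingCoeffIdeal I (m.degree f) →
        m.leadingTerm g ∣ m.leadingTerm f := by
  set c := Submodule.IsPrincipal.generator (m.leadingCoeffIdeal I d)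
  have hc0 : c ≠ 0 := mt (Submodule.IsPrincipal.eq_bot_iff_generator_eq_zero _).2 hd
  obtain ⟨g, hg, hgc⟩ := exists_leadingTerm_eq_monomial (Submodule.IsPrincipal.generator_mem _) hc0
  refine ⟨g, hg, fun h ↦ hc0 (by simpa [h] using hgc.symm), fun f hf hle heq ↦ ?_⟩
  have hdvd : c ∣ m.leadingCoeff f := (Submodule.IsPrincipal.mem_iff_generator_dvd _).1
    (heq ▸ leadingCoeff_mem_leadingCoeffIdeal hf)
  rw [hgc, leadingTerm]
  exact monomial_dvd_monomial.2 ⟨Or.inr hle, hdvd⟩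

variable (m) in
def IsStrongGroebnerBasis (I : Ideal (MvPolynomial ι R)) (G : Finset (MvPolynomial ι R)) :
    Prop :=
  (∀ g ∈ G, g ∈ I ∧ g ≠ 0) ∧ ∀ f ∈ I, f ≠ 0 → ∃ g ∈ G, m.leadingTerm g ∣ m.leadingTerm f

variable (m I) in
theorem exists_isStrongGroebnerBasis [IsPrincipalIdealRing R] [Finite ι] :
    ∃ G, m.IsStrongGroebnerBasis I G := by
  classical
  obtain ⟨D, hD, hcover⟩ :=
    (m.leadingCoeffIdeal_mono I).exists_finset_le_apply_eq {d | m.leadingCoeffIdeal I d ≠ ⊥}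
  choose! g hgI hg0 hgdvd using fun d (hd : m.leadingCoeffIdeal I d ≠ ⊥) ↦
    exists_forall_leadingTerm_dvd hd
  refine ⟨D.image g, Finset.forall_mem_image.2 fun d hd ↦ ⟨hgI d (hD hd), hg0 d (hD hd)⟩,
    fun f hf hf0 ↦ ?_⟩
  have hne : m.leadingCoeffIdeal I (m.degree f) ≠ ⊥ := (Submodule.ne_bot_iff _).2
    ⟨_, leadingCoeff_mem_leadingCoeffIdeal hf, m.leadingCoeff_ne_zero_iff.2 hf0⟩
  obtain ⟨d, hd, hle, heq⟩ := hcover _ hne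
  exact ⟨g d, Finset.mem_image_of_mem g hd, hgdvd d (hD hd) f hf hle heq⟩

namespace IsStrongGroebnerBasis

variable {G : Finset (MvPolynomial ι R)}

theorem span_eq (hG : m.IsStrongGroebnerBasis I G) : Ideal.span G = I := by
  refine le_antisymm (Ideal.span_le.2 fun g hg ↦ (hG.1 g hg).1) fun f hf ↦ ?_
  suffices ∀ a : m.syn, ∀ f ∈ I, m.toSyn (m.degree f) = a → f ∈ Ideal.span G from
    this _ f hf rfl
  intro a
  induction a using WellFoundedLT.induction with
  | _ a IH =>
    rintro f hf rfl
    by_cases hf0 : f = 0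
    · simp [hf0]
    obtain ⟨g, hg, hdvd⟩ := hG.2 f hf hf0
    obtain ⟨q, hq⟩ := exists_support_sub_mul_lt hf0 hdvd
    have hrem : f - q * g ∈ Ideal.span G := by
      by_cases hr0 : f - q * g = 0
      · simp [hr0]
      exact IH _ (hq _ (m.degree_mem_support hr0)) _
        (I.sub_mem hf (I.mul_mem_left q (hG.1 g hg).1)) rfl
    rw [← sub_add_cancel f (q * g)]
    exact Ideal.add_mem _ hrem (Ideal.mul_mem_left _ q (Ideal.subset_span (Finset.mem_coe.2 hg)))

theorem erase [DecidableEq (MvPolynomial ι R)] (hG : m.IsStrongGroebnerBasis I G)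
    {g g' : MvPolynomial ι R} (hg : g ∈ G) (hne : g ≠ g')
    (hdvd : m.leadingTerm g ∣ m.leadingTerm g') :
    m.IsStrongGroebnerBasis I (G.erase g') := by
  refine ⟨fun h hh ↦ hG.1 h (Finset.mem_of_mem_erase hh), fun f hf hf0 ↦ ?_⟩
  obtain ⟨h, hh, hhf⟩ := hG.2 f hf hf0
  by_cases hh' : h = g'
  · exact ⟨g, Finset.mem_erase.2 ⟨hne, hg⟩, hdvd.trans (hh' ▸ hhf)⟩
  · exact ⟨h, Finset.mem_erase.2 ⟨hh', hh⟩, hhf⟩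

end IsStrongGroebnerBasis

theorem not_leadingTerm_dvd_of_minimal {G : Finset (MvPolynomial ι R)}
    (hG : Minimal (m.IsStrongGroebnerBasis I) G) {g g' : MvPolynomial ι R} (hg : g ∈ G)
    (hg' : g' ∈ G) (hne : g ≠ g') : ¬ m.leadingTerm g ∣ m.leadingTerm g' := by
  classical
  exact fun hdvd ↦
    Finset.notMem_erase g' G (hG.2 (hG.1.erase hg hne hdvd) (Finset.erase_subset g' G) hg')

end MonomialOrder

namespace HApaper

open MvPolynomial

namespace TermOrder

variable {l : ℕ} (σ : TermOrder l)

theorem lin_le_of_le {d e : Fin l →₀ ℕ} (h : d ≤ e) : σ.lin.le d e := by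
  simpa [tsub_add_cancel_of_le h] using σ.add_le_add_right 0 (e - d) d (σ.zero_le _)

theorem wellQuasiOrdered_lin_le : WellQuasiOrdered σ.lin.le := by
  intro x
  obtain ⟨i, j, hij, h⟩ : ∃ i j, i < j ∧ x i ≤ x j := wellQuasiOrdered_le x
  exact ⟨i, j, hij, σ.lin_le_of_le h⟩

noncomputable def toMonomialOrder : MonomialOrder (Fin l) where
  syn := Fin l →₀ ℕ
  linearOrderSyn := σ.lin
  isOrderedAddMonoid_syn := @IsOrderedAddMonoid.mk _ _ σ.lin.toPreorder
    (fun a b h c ↦ σ.add_le_add_right a b c h)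
    (fun a b h c ↦ by simpa only [add_comm c] using σ.add_le_add_right a b c h)
  toSyn := AddEquiv.refl _
  toSyn_monotone _ _ := σ.lin_le_of_le
  wellFoundedLT_syn :=
    @WellQuasiOrderedLE.to_wellFoundedLT _ σ.lin.toPreorder
      (@WellQuasiOrderedLE.mk _ σ.lin.toLE σ.wellQuasiOrdered_lin_le)

theorem lm_eq_degree (f : MvPolynomial (Fin l) ℤ) : σ.lm f = σ.toMonomialOrder.degree f := by
  let _ := σ.lin
  rcases f.support.eq_empty_or_nonempty with hf | hf
  · simp [TermOrder.lm, hf, MonomialOrder.degree]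
  obtain ⟨a, ha⟩ := Finset.max_of_nonempty hf
  rw [show σ.lm f = a by simp [TermOrder.lm, ha]]
  exact σ.toMonomialOrder.toSyn.injective <|
    le_antisymm (σ.toMonomialOrder.le_degree (Finset.mem_of_max ha))
      (Finset.le_max_of_eq (σ.toMonomialOrder.degree_mem_support (support_nonempty.1 hf)) ha)

theorem lt_eq_leadingTerm (f : MvPolynomial (Fin l) ℤ) :
    σ.lt f = σ.toMonomialOrder.leadingTerm f := by
  rw [TermOrder.lt, TermOrder.lc, lm_eq_degree]
  rfl

end TermOrder

theorem exists_minimal_strong_groebner_basis_general {l : ℕ} (σ : TermOrder l)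
    (I : Ideal (MvPolynomial (Fin l) ℤ)) :
    ∃ G : Finset (MvPolynomial (Fin l) ℤ), IsMinimalStrongGroebnerBasis σ I G := by
  obtain ⟨G, hG⟩ := σ.toMonomialOrder.exists_isStrongGroebnerBasis I
  obtain ⟨S, -, hS⟩ := exists_minimal_le_of_wellFoundedLT _ G hG
  refine ⟨S, fun g hg ↦ (hS.1.1 g hg).2, hS.1.span_eq, ?_, ?_⟩
  · simpa only [σ.lt_eq_leadingTerm] using hS.1.2
  · simpa only [σ.lt_eq_leadingTerm] using
      fun g hg g' hg' ↦ MonomialOrder.not_leadingTerm_dvd_of_minimal hS hg hg'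

/-- Every nonzero ideal of `ℤ[x_1,…,x_l]` has a minimal strong `σ`-Gröbner basis. -/
theorem exists_minimal_strong_groebner_basis {l : ℕ} (σ : TermOrder l)
    (I : Ideal (MvPolynomial (Fin l) ℤ)) (hI : I ≠ ⊥) :
    ∃ G : Finset (MvPolynomial (Fin l) ℤ), IsMinimalStrongGroebnerBasis σ I G :=
  exists_minimal_strong_groebner_basis_general σ I

end HApaper
end

section
/- Let I be an ideal of R = Z[x_1,…,x_l] and σ a term ordering on R. If a prime number p is σ-lucky for I, then p is a non-zero divisor on R/I, i.e., for every f ∈ R, pf ∈ I implies f ∈ I. -/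
/-!
If `LT(g) ∣ LT(p f)` with `p ∤ LC(g)`, then already `LT(g) ∣ LT(f)`, so one reduction step
`f ↦ f - q g` by an element `g ∈ I` removes the leading term of `f` while keeping
`p (f - q g) ∈ I`.
Since a term order is a well-order (Dickson's lemma), iterating this reduces `f` to `0` modulo `I`.
-/

namespace HApaper

/-- A prime `p` is `σ`-lucky for `I` if it divides no leading coefficient of a
minimal strong `σ`-Gröbner basis of `I`. -/
def IsLuckyPrime {l : ℕ} (σ : TermOrder l) (I : Ideal (MvPolynomial (Fin l) ℤ))
    (p : ℕ) : Prop :=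
  ∃ G : Finset (MvPolynomial (Fin l) ℤ), IsMinimalStrongGroebnerBasis σ I G ∧
    ∀ g ∈ G, ¬ ((p : ℤ) ∣ σ.lc g)

open MvPolynomial

lemma monomial_dvd_of_dvd_C_mul {ι R : Type*} [CommRing R] [NoZeroDivisors R]
    {a b : ι →₀ ℕ} {r s c : R} (hc : c ≠ 0) (hcop : IsCoprime c r)
    (h : monomial a r ∣ C c * monomial b s) : monomial a r ∣ monomial b s := by
  rw [C_mul_monomial, monomial_dvd_monomial] at h
  rw [monomial_dvd_monomial]
  exact ⟨h.1.imp_left fun h0 => (mul_eq_zero.1 h0).resolve_left hc,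
    hcop.symm.dvd_of_dvd_mul_left h.2⟩

namespace TermOrder

variable {l : ℕ} (σ : TermOrder l)

lemma le_of_le {a b : Fin l →₀ ℕ} (h : a ≤ b) : σ.lin.le a b := by
  obtain ⟨e, rfl⟩ := exists_add_of_le h
  simpa only [zero_add, add_comm e a] using σ.add_le_add_right 0 e a (σ.zero_le e)

lemma wellFounded : WellFounded σ.lin.lt := by
  refine RelEmbedding.wellFounded_iff_isEmpty.2 ⟨fun f => ?_⟩
  obtain ⟨m, n, hmn, hle⟩ := wellQuasiOrdered_le (α := Fin l →₀ ℕ) f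
  exact ((σ.lin.lt_iff_le_not_ge _ _).1 (f.map_rel_iff.2 hmn)).2 (σ.le_of_le hle)

variable {σ} {f g : MvPolynomial (Fin l) ℤ}

lemma lm_eq_max' (hf : f ≠ 0) :
    σ.lm f = @Finset.max' _ σ.lin f.support (support_nonempty.2 hf) := by
  rw [lm, ← @Finset.coe_max' _ σ.lin f.support (support_nonempty.2 hf), WithBot.unbotD_coe]

lemma lm_mem_support (hf : f ≠ 0) : σ.lm f ∈ f.support := by
  rw [lm_eq_max' hf]
  exact @Finset.max'_mem _ σ.lin _ _

lemma lc_ne_zero (hf : f ≠ 0) : σ.lc f ≠ 0 :=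
  mem_support_iff.1 (lm_mem_support hf)

lemma le_lm (hf : f ≠ 0) {m : Fin l →₀ ℕ} (hm : m ∈ f.support) : σ.lin.le m (σ.lm f) := by
  rw [lm_eq_max' hf]
  exact @Finset.le_max' _ σ.lin _ m hm

lemma lm_C_mul {c : ℤ} (hc : c ≠ 0) : σ.lm (C c * f) = σ.lm f := by
  rw [lm, lm, C_mul', support_smul_eq hc]

lemma lt_C_mul {c : ℤ} (hc : c ≠ 0) : σ.lt (C c * f) = C c * σ.lt f := by
  rw [lt, lt, lc, lc, lm_C_mul hc, coeff_C_mul, C_mul_monomial]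

lemma le_lm_add_of_mem_support_monomial_mul (hg : g ≠ 0) {e m : Fin l →₀ ℕ} {c : ℤ}
    (hm : m ∈ (monomial e c * g).support) : σ.lin.le m (σ.lm g + e) := by
  rw [mem_support_iff, coeff_monomial_mul'] at hm
  split_ifs at hm with hem
  · have hle := σ.add_le_add_right _ _ e
      (le_lm hg (mem_support_iff.2 (right_ne_zero_of_mul hm)))
    rwa [tsub_add_cancel_of_le hem] at hle
  · exact absurd rfl hm

lemma lt_lm_of_mem_support_sub (hf : f ≠ 0) {r : MvPolynomial (Fin l) ℤ}
    (hr : ∀ m ∈ r.support, σ.lin.le m (σ.lm f)) (hcoeff : coeff (σ.lm f) r = σ.lc f)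
    {m : Fin l →₀ ℕ} (hm : m ∈ (f - r).support) : σ.lin.lt m (σ.lm f) := by
  classical
  have hne : m ≠ σ.lm f := by
    rintro rfl
    exact mem_support_iff.1 hm (by rw [coeff_sub, hcoeff, lc, sub_self])
  have hle : σ.lin.le m (σ.lm f) := by
    rcases Finset.mem_union.1 (support_sub _ f r hm) with hmf | hmr
    · exact le_lm hf hmf
    · exact hr m hmr
  exact @lt_of_le_of_ne _ σ.lin.toPartialOrder _ _ hle hne

lemma exists_sub_mul_support_lt_lm (hf : f ≠ 0) (hg : g ≠ 0)
    (h : σ.lt g ∣ σ.lt f) :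
    ∃ q, ∀ m ∈ (f - q * g).support, σ.lin.lt m (σ.lm f) := by
  obtain ⟨hlm | hlm, c, hc⟩ := monomial_dvd_monomial.1 h
  · exact absurd hlm (lc_ne_zero hf)
  refine ⟨monomial (σ.lm f - σ.lm g) c, fun m => lt_lm_of_mem_support_sub hf ?_ ?_⟩
  · intro m hm
    simpa only [add_tsub_cancel_of_le hlm] using
      le_lm_add_of_mem_support_monomial_mul (σ := σ) hg hm
  · rw [coeff_monomial_mul', if_pos tsub_le_self, tsub_tsub_cancel_of_le hlm, hc, mul_comm]
    rfl

lemma induction_on_lm {P : MvPolynomial (Fin l) ℤ → Prop} (zero : P 0)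
    (step : ∀ f ≠ 0, (∀ g, (∀ m ∈ g.support, σ.lin.lt m (σ.lm f)) → P g) → P f)
    (f : MvPolynomial (Fin l) ℤ) : P f := by
  suffices ∀ μ f, σ.lm f = μ → P f from this _ f rfl
  intro μ
  induction μ using σ.wellFounded.induction with
  | _ μ IH =>
    rintro f rfl
    by_cases hf : f = 0
    · exact hf ▸ zero
    refine step f hf fun g hg => ?_
    by_cases hg0 : g = 0
    · exact hg0 ▸ zero
    exact IH _ (hg _ (lm_mem_support hg0)) g rfl

end TermOrder

/-- A `σ`-lucky prime for `I` is a non-zero divisor on `R/I`. -/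
theorem lucky_prime_is_nonzerodivisor {l : ℕ} (σ : TermOrder l)
    (I : Ideal (MvPolynomial (Fin l) ℤ)) (p : ℕ) (hp : p.Prime)
    (hlucky : IsLuckyPrime σ I p) :
    ∀ f : MvPolynomial (Fin l) ℤ, (p : MvPolynomial (Fin l) ℤ) * f ∈ I → f ∈ I := by
  obtain ⟨G, ⟨hG0, hGspan, hGlt, -⟩, hGlc⟩ := hlucky
  have hp0 : (p : ℤ) ≠ 0 := Int.natCast_ne_zero.2 hp.ne_zero
  rw [← map_natCast C p]
  refine σ.induction_on_lm (fun _ => I.zero_mem) fun f hf IH hpf => ?_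
  obtain ⟨g, hgG, hdvd⟩ := hGlt _ hpf (mul_ne_zero (C_ne_zero.2 hp0) hf)
  rw [TermOrder.lt_C_mul hp0] at hdvd
  have hcop : IsCoprime (p : ℤ) (σ.lc g) :=
    (Nat.prime_iff_prime_int.1 hp).coprime_iff_not_dvd.2 (hGlc g hgG)
  obtain ⟨q, hq⟩ := TermOrder.exists_sub_mul_support_lt_lm hf (hG0 g hgG)
    (monomial_dvd_of_dvd_C_mul hp0 hcop hdvd)
  have hqg : q * g ∈ I := I.mul_mem_left q (hGspan ▸ Ideal.subset_span hgG)
  have hred : f - q * g ∈ I :=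
    IH _ hq (by rw [mul_sub]; exact I.sub_mem hpf (I.mul_mem_left _ hqg))
  simpa using I.add_mem hred hqg

end HApaper
end
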